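/- In any HR instance, every envy-free matching has size at most the size of a stable matching; hence if a stable matching is feasible in an HRLQ instance, it is a maximum-size feasible envy-free matching. -/

import Mathlib

/-- An HRLQ instance: bipartite graph on residents `R` and hospitals `H` with
strict preferences encoded as rank functions (lower rank = more preferred)
and lower/upper quotas per hospital. -/
structure HRLQ (R H : Type) where
  E : R → H → Prop
  rPref : R → H → ℕ
  hPref : H → R → ℕ
  lq : H → ℕ
  uq : H → ℕ

namespace HRLQ

variable {R H : Type}

/-- residents matched to hospital `h` -/
def matchedTo (M : R → Option H) (h : H) : Set R := {r | M r = some h}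

/-- size of a matching -/
noncomputable def msize (M : R → Option H) : ℕ := {r | M r ≠ none}.ncard

variable (I : HRLQ R H)

/-- resident `r` strictly prefers hospital `h` to assignment `o`
    (being unmatched is least preferred); `h` must be acceptable to `r`. -/
def PrefersH (r : R) (h : H) (o : Option H) : Prop :=
  I.E r h ∧ ∀ h', o = some h' → I.rPref r h < I.rPref r h'

def IsMatching (M : R → Option H) : Prop :=
  (∀ r h, M r = some h → I.E r h) ∧ ∀ h, (matchedTo M h).ncard ≤ I.uq h

def Feasible (M : R → Option H) : Prop :=
  ∀ h, I.lq h ≤ (matchedTo M h).ncard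

def Blocks (M : R → Option H) (r : R) (h : H) : Prop :=
  I.E r h ∧ M r ≠ some h ∧ I.PrefersH r h (M r) ∧
    ((matchedTo M h).ncard < I.uq h ∨ ∃ r' ∈ matchedTo M h, I.hPref h r < I.hPref h r')

def Stable (M : R → Option H) : Prop := ∀ r h, ¬ I.Blocks M r h

def Envies (M : R → Option H) (r r' : R) : Prop :=
  ∃ h, M r' = some h ∧ I.PrefersH r h (M r) ∧ I.hPref h r < I.hPref h r'

def EnvyFree (M : R → Option H) : Prop := ∀ r r', ¬ I.Envies M r r'

def RelaxedStable (M : R → Option H) : Prop :=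
  (∀ h, {r | r ∈ matchedTo M h ∧ ∃ h', I.Blocks M r h'}.ncard ≤ I.lq h) ∧
  ∀ r, M r = none → ∀ h, ¬ I.Blocks M r h

/-- preferences are strict -/
def StrictPrefs : Prop :=
  (∀ r, Function.Injective (I.rPref r)) ∧ ∀ h, Function.Injective (I.hPref h)

end HRLQ

/-!
Let `A` be the set of residents who strictly prefer their partner in the envy-free matching `M`
to their partner in the stable matching `Ms`. If `r ∈ A` is assigned to `h` by `M`, stability
of `Ms` forces `h` to be full in `Ms` with residents `h` ranks above `r`; envy-freeness of `M`
then puts every resident of `Ms(h) \ M(h)` into `A`. Hence for each hospital at least as many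
members of `A` are assigned to it by `Ms` as by `M`. Both counts sum to `|A|` over all possible
partners including "unmatched", and no member of `A` is unmatched in `M`, so none is unmatched
in `Ms` either. A resident matched in `M` but not in `Ms` would be such a member.
-/

namespace HRLQ

variable {R H : Type} {I : HRLQ R H} {M Ms : R → Option H} {r x : R} {h : H}

lemma PrefersH.ne_some {o : Option H} (hp : I.PrefersH r h o) : o ≠ some h :=
  fun ho => lt_irrefl _ (hp.2 h ho)

lemma Stable.envyFree (hSt : I.Stable M) : I.EnvyFree M := by
  rintro r r' ⟨h, hr', hp, hh⟩
  exact hSt r h ⟨hp.1, hp.ne_some, hp, Or.inr ⟨r', hr', hh⟩⟩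

lemma Stable.saturated_of_prefersH (hSt : I.Stable M) (hp : I.PrefersH r h (M r)) :
    I.uq h ≤ (matchedTo M h).ncard ∧
      ∀ r' ∈ matchedTo M h, I.hPref h r' ≤ I.hPref h r := by
  have hnb : ¬(_ ∨ _) := fun hd => hSt r h ⟨hp.1, hp.ne_some, hp, hd⟩
  push Not at hnb
  exact hnb

lemma EnvyFree.exists_better_of_hPref_lt (hstrict : I.StrictPrefs) (hEF : I.EnvyFree M)
    (hr : M r = some h) (hxh : I.E x h) (hx : M x ≠ some h)
    (hlt : I.hPref h x < I.hPref h r) :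
    ∃ h', M x = some h' ∧ I.rPref x h' < I.rPref x h := by
  by_contra! hcon
  refine hEF x r ⟨h, hr, ⟨hxh, fun h' hh' => ?_⟩, hlt⟩
  exact (hcon h' hh').lt_of_ne fun he => hx (hstrict.1 x he ▸ hh')

variable (I) in
def PrefersPartner (M M' : R → Option H) (r : R) : Prop :=
  ∃ h, M r = some h ∧ I.PrefersH r h (M' r)

lemma PrefersPartner.ne_none {M M' : R → Option H} (hp : I.PrefersPartner M M' r) :
    M r ≠ none := by
  obtain ⟨h, hrh, -⟩ := hp
  simp [hrh]

lemma PrefersPartner.prefersH {M M' : R → Option H} (hp : I.PrefersPartner M M' r)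
    (hr : M r = some h) : I.PrefersH r h (M' r) := by
  obtain ⟨h', hrh', hp⟩ := hp
  rwa [Option.some_injective _ (hr.symm.trans hrh')]

open Finset Classical

lemma ncard_matchedTo [Fintype R] (M : R → Option H) (h : H) :
    (matchedTo M h).ncard = #{r | M r = some h} := by
  rw [← Set.ncard_coe_finset]; congr; ext; simp [matchedTo]

lemma card_prefersPartner_fiber_le [Fintype R] (hstrict : I.StrictPrefs)
    (hMs : I.IsMatching Ms) (hSt : I.Stable Ms) (hM : I.IsMatching M) (hEF : I.EnvyFree M)
    (h : H) :
    #{r | I.PrefersPartner M Ms r ∧ M r = some h} ≤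
      #{r | I.PrefersPartner M Ms r ∧ Ms r = some h} := by
  obtain hA | ⟨r, hr⟩ := eq_empty_or_nonempty {r | I.PrefersPartner M Ms r ∧ M r = some h}
  · simp [hA]
  obtain ⟨hrp, hrh⟩ := by simpa using hr
  obtain ⟨hfull, hbest⟩ := hSt.saturated_of_prefersH (hrp.prefersH hrh)
  rw [ncard_matchedTo] at hfull
  calc #{r | I.PrefersPartner M Ms r ∧ M r = some h}
      ≤ #(({r | M r = some h} : Finset R) \ ({r | Ms r = some h} : Finset R)) := by
        refine card_le_card fun y hy => ?_
        obtain ⟨hyp, hyh⟩ := by simpa using hy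
        simp only [mem_sdiff, mem_filter, mem_univ, true_and]
        exact ⟨hyh, (hyp.prefersH hyh).ne_some⟩
    _ ≤ #(({r | Ms r = some h} : Finset R) \ ({r | M r = some h} : Finset R)) :=
        card_sdiff_le_card_sdiff_iff.2 ((ncard_matchedTo M h ▸ hM.2 h).trans hfull)
    _ ≤ #{r | I.PrefersPartner M Ms r ∧ Ms r = some h} := by
        refine card_le_card fun x hx => ?_
        simp only [mem_sdiff, mem_filter, mem_univ, true_and] at hx ⊢
        obtain ⟨hxs, hx⟩ := hx
        have hlt : I.hPref h x < I.hPref h r :=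
          (hbest x hxs).lt_of_ne fun he => hx (hstrict.2 h he ▸ hrh)
        obtain ⟨h', hxh', hrank⟩ :=
          hEF.exists_better_of_hPref_lt hstrict hrh (hMs.1 x h hxs) hx hlt
        refine ⟨⟨h', hxh', hM.1 x h' hxh', fun _ he => ?_⟩, hxs⟩
        exact Option.some_inj.1 (hxs.symm.trans he) ▸ hrank

lemma EnvyFree.ne_none_of_stable [Fintype R] [Fintype H] (hstrict : I.StrictPrefs)
    (hMs : I.IsMatching Ms) (hSt : I.Stable Ms) (hM : I.IsMatching M) (hEF : I.EnvyFree M)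
    (hr : M r ≠ none) : Ms r ≠ none := by
  intro hrs
  obtain ⟨h, hrh⟩ := Option.ne_none_iff_exists'.mp hr
  have hzero : #{r | I.PrefersPartner M Ms r ∧ M r = none} = 0 :=
    card_eq_zero.2 (filter_eq_empty_iff.2 fun r _ hr => hr.1.ne_none hr.2)
  have hfiber : ∀ o ∈ univ, #{r | I.PrefersPartner M Ms r ∧ M r = o} ≤
      #{r | I.PrefersPartner M Ms r ∧ Ms r = o} := by
    rintro (_ | h') -
    · exact hzero ▸ Nat.zero_le _
    · exact card_prefersPartner_fiber_le hstrict hMs hSt hM hEF h'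
  have hsum : ∑ o, #{r | I.PrefersPartner M Ms r ∧ M r = o} =
      ∑ o, #{r | I.PrefersPartner M Ms r ∧ Ms r = o} := by
    simp only [← filter_filter]
    rw [← card_eq_sum_card_fiberwise (by simp), ← card_eq_sum_card_fiberwise (by simp)]
  have hnone := (sum_eq_sum_iff_of_le hfiber).1 hsum none (mem_univ _)
  have hrp : I.PrefersPartner M Ms r := ⟨h, hrh, hM.1 r h hrh, fun _ he => by simp [hrs] at he⟩
  have hpos : 0 < #{r | I.PrefersPartner M Ms r ∧ Ms r = none} :=
    card_pos.2 ⟨r, mem_filter.2 ⟨mem_univ r, hrp, hrs⟩⟩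
  omega

lemma msize_le_of_envyFree [Fintype R] [Fintype H] (hstrict : I.StrictPrefs)
    (hMs : I.IsMatching Ms) (hSt : I.Stable Ms) (hM : I.IsMatching M) (hEF : I.EnvyFree M) :
    msize M ≤ msize Ms :=
  Set.ncard_le_ncard (fun _ hr => hEF.ne_none_of_stable hstrict hMs hSt hM hr) (Set.toFinite _)

end HRLQ

/-- Every envy-free matching has size at most that of a stable matching; hence a
feasible stable matching is a maximum-size feasible envy-free matching. -/
theorem envy_free_le_stable_size_and_feasible_stable_is_maxefm
    {R H : Type} [Fintype R] [Fintype H] (I : HRLQ R H)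
    (hstrict : I.StrictPrefs)
    (Ms : R → Option H) (hMs : I.IsMatching Ms) (hMsStable : I.Stable Ms) :
    (∀ Me, I.IsMatching Me → I.EnvyFree Me → HRLQ.msize Me ≤ HRLQ.msize Ms) ∧
    (I.Feasible Ms →
      I.EnvyFree Ms ∧
      ∀ M', I.IsMatching M' → I.Feasible M' → I.EnvyFree M' →
        HRLQ.msize M' ≤ HRLQ.msize Ms) :=
  ⟨fun _ hMe hEF => HRLQ.msize_le_of_envyFree hstrict hMs hMsStable hMe hEF,
    fun _ => ⟨hMsStable.envyFree,
      fun _ hM' _ hEF' => HRLQ.msize_le_of_envyFree hstrict hMs hMsStable hM' hEF'⟩⟩
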